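/- In the setting of the previous monotonicity statement, equality M(G(N,\overline{N})) = M(N,\overline{N}) holds if and only if N = \overline{N} ∘ 𝒜 and \overline{N} = N ∘ ℬ, where G(N,\overline{N}) = ((1/2)(N + \overline{N}∘𝒜), (1/2)(\overline{N} + N∘ℬ)). -/

import Mathlib

open Matrix
open scoped BigOperators

/-- The k-fold tensor (Kronecker) power `U^{⊗k}` of a d×d matrix. -/
def tensorPow (k d : ℕ) (U : Matrix (Fin d) (Fin d) ℂ) :
    Matrix (Fin k → Fin d) (Fin k → Fin d) ℂ :=
  Matrix.of fun f g => ∏ i, U (f i) (g i)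

/-- The unitary (conjugation) channel `X ↦ U X Uᴴ` as a linear superoperator. -/
noncomputable def conjChan {m : Type*} [Fintype m] [DecidableEq m]
    (U : Matrix m m ℂ) : Matrix m m ℂ →ₗ[ℂ] Matrix m m ℂ :=
  (LinearMap.mulRight ℂ Uᴴ).comp (LinearMap.mulLeft ℂ U)

/-- The Frobenius (Hilbert–Schmidt) norm of a superoperator:
`‖N‖₂ = sqrt( Σ_{αβγδ} |⟨α| N[|β⟩⟨γ|] |δ⟩|² )`. -/
noncomputable def frobNorm {m : Type*} [Fintype m] [DecidableEq m]
    (N : Matrix m m ℂ →ₗ[ℂ] Matrix m m ℂ) : ℝ :=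
  Real.sqrt (∑ α, ∑ β, ∑ γ, ∑ δ, ‖N (Matrix.single β γ 1) α δ‖ ^ 2)

set_option linter.unusedSectionVars false

section Aux
variable {m : Type*} [Fintype m] [DecidableEq m]


lemma conjChan_apply (U X : Matrix m m ℂ) : conjChan U X = U * X * Uᴴ := rfl

lemma apply_eq (M : Matrix m m ℂ →ₗ[ℂ] Matrix m m ℂ) (X : Matrix m m ℂ) (α δ : m) :
    M X α δ = ∑ a, ∑ b, X a b * M (Matrix.single a b 1) α δ := by
  conv_lhs => rw [matrix_eq_sum_single X]
  have h : ∀ a b : m, single a b (X a b) = X a b • single a b (1:ℂ) := by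
    intro a b; rw [smul_single, smul_eq_mul, mul_one]
  simp only [h, map_sum, _root_.map_smul, Matrix.sum_apply, Matrix.smul_apply, smul_eq_mul]

lemma conjChan_entry (U : Matrix m m ℂ) (β γ a b : m) :
    (U * Matrix.single β γ 1 * Uᴴ : Matrix m m ℂ) a b
      = U a β * (starRingEnd ℂ) (U b γ) := by
  simp [Matrix.mul_apply, Matrix.single, Matrix.conjTranspose_apply, ite_and,
    Finset.sum_ite_eq, Finset.sum_ite_eq', mul_comm]

lemma sum_normSq_eq_trace (W : Matrix m m ℂ) :
    ∑ β, ∑ γ, Complex.normSq (W β γ) = (Matrix.trace (Wᴴ * W)).re := by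
  rw [Finset.sum_comm]
  simp [Matrix.trace, Matrix.mul_apply, Matrix.diag, Matrix.conjTranspose_apply,
    Complex.normSq_apply]

lemma trace_conj_invariant (V v : Matrix m m ℂ) (hV : Vᴴ * V = 1) :
    Matrix.trace ((V * v * Vᴴ)ᴴ * (V * v * Vᴴ)) = Matrix.trace (vᴴ * v) := by
  have h1 : (V * v * Vᴴ)ᴴ = V * vᴴ * Vᴴ := by
    simp [Matrix.conjTranspose_mul, Matrix.mul_assoc]
  have h2 : V * vᴴ * Vᴴ * (V * v * Vᴴ) = V * ((vᴴ * (Vᴴ * V)) * v) * Vᴴ := by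
    noncomm_ring
  rw [h1, h2, hV, mul_one, Matrix.trace_mul_comm, ← Matrix.mul_assoc, hV, Matrix.one_mul]

lemma transpose_unitary (U : Matrix m m ℂ) (hU : U * Uᴴ = 1) : (Uᵀ)ᴴ * Uᵀ = 1 := by
  have h := congrArg Matrix.transpose hU
  rw [Matrix.transpose_mul, Matrix.transpose_one] at h
  have e : Uᴴᵀ = Uᵀᴴ := by ext i j; simp
  rwa [e] at h

lemma sum_sum_normSq_conj (U : Matrix m m ℂ) (hU : U * Uᴴ = 1) (v : Matrix m m ℂ) :
    ∑ β, ∑ γ, Complex.normSq (∑ a, ∑ b,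
        (U * Matrix.single β γ 1 * Uᴴ : Matrix m m ℂ) a b * v a b)
      = ∑ a, ∑ b, Complex.normSq (v a b) := by
  have hW : ∀ β γ : m, (∑ a, ∑ b,
      (U * Matrix.single β γ 1 * Uᴴ : Matrix m m ℂ) a b * v a b)
      = (Uᵀ * v * (Uᵀ)ᴴ : Matrix m m ℂ) β γ := by
    intro β γ
    simp only [conjChan_entry]
    simp only [Matrix.mul_apply, Matrix.transpose_apply, Matrix.conjTranspose_apply,
      Finset.sum_mul, Finset.mul_sum]
    rw [Finset.sum_comm]
    exact Finset.sum_congr rfl fun b _ => Finset.sum_congr rfl fun a _ => by rw [starRingEnd_apply]; ring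
  simp_rw [hW]
  rw [sum_normSq_eq_trace, trace_conj_invariant _ _ (transpose_unitary U hU),
    ← sum_normSq_eq_trace]

noncomputable def frobSq (M : Matrix m m ℂ →ₗ[ℂ] Matrix m m ℂ) : ℝ :=
  ∑ α, ∑ β, ∑ γ, ∑ δ, Complex.normSq (M (Matrix.single β γ 1) α δ)

lemma frobNorm_sq (M : Matrix m m ℂ →ₗ[ℂ] Matrix m m ℂ) :
    frobNorm M ^ 2 = frobSq M := by
  rw [frobNorm, Real.sq_sqrt (by refine Finset.sum_nonneg fun _ _ => Finset.sum_nonneg fun _ _ => Finset.sum_nonneg fun _ _ => Finset.sum_nonneg fun _ _ => ?_; positivity)]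
  unfold frobSq
  simp_rw [Complex.sq_norm]

lemma frobSq_nonneg (M : Matrix m m ℂ →ₗ[ℂ] Matrix m m ℂ) : 0 ≤ frobSq M := by
  unfold frobSq
  refine Finset.sum_nonneg fun _ _ => Finset.sum_nonneg fun _ _ => Finset.sum_nonneg fun _ _ => Finset.sum_nonneg fun _ _ => Complex.normSq_nonneg _

lemma sum_rot (f : m → m → m → ℝ) :
    ∑ β, ∑ γ, ∑ δ, f β γ δ = ∑ δ, ∑ β, ∑ γ, f β γ δ := by
  have h : ∀ β : m, ∑ γ, ∑ δ, f β γ δ = ∑ δ, ∑ γ, f β γ δ :=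
    fun β => Finset.sum_comm
  simp_rw [h]
  exact Finset.sum_comm

lemma frobSq_comp (M : Matrix m m ℂ →ₗ[ℂ] Matrix m m ℂ) (U : Matrix m m ℂ)
    (hU : U * Uᴴ = 1) : frobSq (M.comp (conjChan U)) = frobSq M := by
  unfold frobSq
  refine Finset.sum_congr rfl fun α _ => ?_
  calc ∑ β, ∑ γ, ∑ δ, Complex.normSq ((M.comp (conjChan U)) (Matrix.single β γ 1) α δ)
      = ∑ δ, ∑ β, ∑ γ, Complex.normSq ((M.comp (conjChan U)) (Matrix.single β γ 1) α δ) :=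
        sum_rot _
    _ = ∑ δ, ∑ a, ∑ b, Complex.normSq (M (Matrix.single a b 1) α δ) := by
        refine Finset.sum_congr rfl fun δ _ => ?_
        have h : ∀ β γ : m, (M.comp (conjChan U)) (Matrix.single β γ 1) α δ
            = ∑ a, ∑ b, (U * Matrix.single β γ 1 * Uᴴ : Matrix m m ℂ) a b
                * M (Matrix.single a b 1) α δ := by
          intro β γ
          rw [LinearMap.comp_apply, conjChan_apply, apply_eq]
        simp_rw [h]
        exact sum_sum_normSq_conj U hU (Matrix.of fun a b => M (Matrix.single a b 1) α δ)
    _ = ∑ a, ∑ b, ∑ δ, Complex.normSq (M (Matrix.single a b 1) α δ) := (sum_rot _).symm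

lemma frobSq_parallelogram (X Y : Matrix m m ℂ →ₗ[ℂ] Matrix m m ℂ) :
    frobSq (X + Y) + frobSq (X - Y) = 2 * frobSq X + 2 * frobSq Y := by
  unfold frobSq
  simp only [Finset.mul_sum, ← Finset.sum_add_distrib]
  refine Finset.sum_congr rfl fun α _ => Finset.sum_congr rfl fun β _ =>
    Finset.sum_congr rfl fun γ _ => Finset.sum_congr rfl fun δ _ => ?_
  simp only [LinearMap.add_apply, LinearMap.sub_apply, Matrix.add_apply, Matrix.sub_apply,
    Complex.normSq_apply, Complex.add_re, Complex.add_im, Complex.sub_re, Complex.sub_im]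
  ring

lemma frobSq_smul_half (M : Matrix m m ℂ →ₗ[ℂ] Matrix m m ℂ) :
    frobSq ((1 / 2 : ℂ) • M) = (1 / 4) * frobSq M := by
  unfold frobSq
  have h : Complex.normSq (1 / 2 : ℂ) = 1 / 4 := by
    simp [Complex.normSq_apply]
    norm_num
  simp only [LinearMap.smul_apply, Matrix.smul_apply, smul_eq_mul, Complex.normSq_mul, h,
    ← Finset.mul_sum]

lemma frobSq_eq_zero_iff (M : Matrix m m ℂ →ₗ[ℂ] Matrix m m ℂ) :
    frobSq M = 0 ↔ M = 0 := by
  constructor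
  · intro h
    have hz : ∀ α β γ δ : m, M (Matrix.single β γ 1) α δ = 0 := by
      intro α β γ δ
      have h1 := (Finset.sum_eq_zero_iff_of_nonneg (fun α _ => by refine Finset.sum_nonneg fun _ _ => Finset.sum_nonneg fun _ _ => Finset.sum_nonneg fun _ _ => ?_; exact Complex.normSq_nonneg _)).mp h
        α (Finset.mem_univ α)
      have h2 := (Finset.sum_eq_zero_iff_of_nonneg (fun β _ => Finset.sum_nonneg fun _ _ => Finset.sum_nonneg fun _ _ => Complex.normSq_nonneg _)).mp h1
        β (Finset.mem_univ β)
      have h3 := (Finset.sum_eq_zero_iff_of_nonneg (fun γ _ => Finset.sum_nonneg fun _ _ => Complex.normSq_nonneg _)).mp h2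
        γ (Finset.mem_univ γ)
      have h4 := (Finset.sum_eq_zero_iff_of_nonneg (fun δ _ => Complex.normSq_nonneg _)).mp h3
        δ (Finset.mem_univ δ)
      exact Complex.normSq_eq_zero.mp h4
    refine LinearMap.ext fun X => ?_
    ext α δ
    rw [apply_eq]
    simp [hz]
  · rintro rfl
    simp [frobSq]

end Aux

lemma tensorPow_unitary (k d : ℕ) (A : Matrix (Fin d) (Fin d) ℂ)
    (hA : A ∈ Matrix.unitaryGroup (Fin d) ℂ) :
    tensorPow k d A * (tensorPow k d A)ᴴ = 1 := by
  have hA' : A * Aᴴ = 1 := by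
    rw [← Matrix.star_eq_conjTranspose]; exact Matrix.mem_unitaryGroup_iff.mp hA
  ext f g
  rw [Matrix.mul_apply]
  have h1 : ∀ h : Fin k → Fin d, tensorPow k d A f h * (tensorPow k d A)ᴴ h g
      = ∏ i, (A (f i) (h i) * (starRingEnd ℂ) (A (g i) (h i))) := by
    intro h
    simp [tensorPow, Matrix.conjTranspose_apply, ← Finset.prod_mul_distrib, map_prod]
  simp_rw [h1]
  have h2 := Finset.prod_univ_sum (fun _ : Fin k => (Finset.univ : Finset (Fin d)))
    (fun i x => A (f i) x * (starRingEnd ℂ) (A (g i) x))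
  rw [Fintype.piFinset_univ] at h2
  rw [← h2]
  have h3 : ∀ i : Fin k, (∑ x, A (f i) x * (starRingEnd ℂ) (A (g i) x))
      = (A * Aᴴ) (f i) (g i) := by
    intro i; rw [Matrix.mul_apply]; simp [Matrix.conjTranspose_apply]
  simp_rw [h3, hA']
  by_cases hfg : f = g
  · simp [hfg, Matrix.one_apply]
  · obtain ⟨i, hi⟩ := Function.ne_iff.mp hfg
    rw [Matrix.one_apply_ne hfg]
    exact Finset.prod_eq_zero (Finset.mem_univ i) (Matrix.one_apply_ne hi)

/-- Equality in the Thue–Morse channel monotonicity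
`M(G(N,N̄)) ≤ M(N,N̄)` holds if and only if `N = N̄ ∘ 𝒜` and `N̄ = N ∘ ℬ`. -/
theorem tm_channel_monotone_equality_iff (d k : ℕ) (A B : Matrix (Fin d) (Fin d) ℂ)
    (hA : A ∈ Matrix.unitaryGroup (Fin d) ℂ) (hB : B ∈ Matrix.unitaryGroup (Fin d) ℂ)
    (NHaar N Nbar : Matrix (Fin k → Fin d) (Fin k → Fin d) ℂ →ₗ[ℂ]
      Matrix (Fin k → Fin d) (Fin k → Fin d) ℂ)
    (hHaar : ∀ V ∈ Matrix.unitaryGroup (Fin d) ℂ,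
      NHaar.comp (conjChan (tensorPow k d V)) = NHaar) :
    (frobNorm ((1 / 2 : ℂ) • (N + Nbar.comp (conjChan (tensorPow k d A))) - NHaar) ^ 2 +
        frobNorm ((1 / 2 : ℂ) • (Nbar + N.comp (conjChan (tensorPow k d B))) - NHaar) ^ 2 =
      frobNorm (N - NHaar) ^ 2 + frobNorm (Nbar - NHaar) ^ 2) ↔
    (N = Nbar.comp (conjChan (tensorPow k d A)) ∧
      Nbar = N.comp (conjChan (tensorPow k d B))) := by
  have hUA := tensorPow_unitary k d A hA
  have hUB := tensorPow_unitary k d B hB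
  have hNA : NHaar.comp (conjChan (tensorPow k d A)) = NHaar := hHaar A hA
  have hNB : NHaar.comp (conjChan (tensorPow k d B)) = NHaar := hHaar B hB
  have compA : (Nbar - NHaar).comp (conjChan (tensorPow k d A))
      = Nbar.comp (conjChan (tensorPow k d A)) - NHaar := by
    rw [LinearMap.sub_comp, hNA]
  have compB : (N - NHaar).comp (conjChan (tensorPow k d B))
      = N.comp (conjChan (tensorPow k d B)) - NHaar := by
    rw [LinearMap.sub_comp, hNB]
  have e1 : (1 / 2 : ℂ) • (N + Nbar.comp (conjChan (tensorPow k d A))) - NHaar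
      = (1 / 2 : ℂ) • ((N - NHaar) + (Nbar - NHaar).comp (conjChan (tensorPow k d A))) := by
    rw [compA]; module
  have e2 : (1 / 2 : ℂ) • (Nbar + N.comp (conjChan (tensorPow k d B))) - NHaar
      = (1 / 2 : ℂ) • ((Nbar - NHaar) + (N - NHaar).comp (conjChan (tensorPow k d B))) := by
    rw [compB]; module
  have hterm1 : frobNorm ((1 / 2 : ℂ) • (N + Nbar.comp (conjChan (tensorPow k d A))) - NHaar) ^ 2
      = (1 / 2) * (frobSq (N - NHaar) + frobSq (Nbar - NHaar))
        - (1 / 4) * frobSq ((N - NHaar) - (Nbar - NHaar).comp (conjChan (tensorPow k d A))) := by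
    rw [e1, frobNorm_sq, frobSq_smul_half]
    have par := frobSq_parallelogram (N - NHaar) ((Nbar - NHaar).comp (conjChan (tensorPow k d A)))
    have hc := frobSq_comp (Nbar - NHaar) (tensorPow k d A) hUA
    linarith
  have hterm2 : frobNorm ((1 / 2 : ℂ) • (Nbar + N.comp (conjChan (tensorPow k d B))) - NHaar) ^ 2
      = (1 / 2) * (frobSq (Nbar - NHaar) + frobSq (N - NHaar))
        - (1 / 4) * frobSq ((Nbar - NHaar) - (N - NHaar).comp (conjChan (tensorPow k d B))) := by
    rw [e2, frobNorm_sq, frobSq_smul_half]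
    have par := frobSq_parallelogram (Nbar - NHaar) ((N - NHaar).comp (conjChan (tensorPow k d B)))
    have hc := frobSq_comp (N - NHaar) (tensorPow k d B) hUB
    linarith
  have main : (frobNorm ((1 / 2 : ℂ) • (N + Nbar.comp (conjChan (tensorPow k d A))) - NHaar) ^ 2 +
        frobNorm ((1 / 2 : ℂ) • (Nbar + N.comp (conjChan (tensorPow k d B))) - NHaar) ^ 2 =
      frobNorm (N - NHaar) ^ 2 + frobNorm (Nbar - NHaar) ^ 2) ↔
      (frobSq ((N - NHaar) - (Nbar - NHaar).comp (conjChan (tensorPow k d A))) = 0 ∧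
       frobSq ((Nbar - NHaar) - (N - NHaar).comp (conjChan (tensorPow k d B))) = 0) := by
    rw [hterm1, hterm2, frobNorm_sq, frobNorm_sq]
    constructor
    · intro h
      have h1 := frobSq_nonneg ((N - NHaar) - (Nbar - NHaar).comp (conjChan (tensorPow k d A)))
      have h2 := frobSq_nonneg ((Nbar - NHaar) - (N - NHaar).comp (conjChan (tensorPow k d B)))
      constructor <;> linarith
    · rintro ⟨h1, h2⟩
      rw [h1, h2]; ring
  have d1 : (N - NHaar) - (Nbar - NHaar).comp (conjChan (tensorPow k d A))
      = N - Nbar.comp (conjChan (tensorPow k d A)) := by rw [compA]; module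
  have d2 : (Nbar - NHaar) - (N - NHaar).comp (conjChan (tensorPow k d B))
      = Nbar - N.comp (conjChan (tensorPow k d B)) := by rw [compB]; module
  rw [main, frobSq_eq_zero_iff, frobSq_eq_zero_iff, d1, d2, sub_eq_zero, sub_eq_zero]
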